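/- Let S be an integral domain with fraction field Q, J a finite set, and Z ⊆ ∏_{x∈J} S the structure algebra of a moment graph on J with nonzero edge labels. Then the inclusion Z ⊆ ∏_{x∈J} S becomes an isomorphism after tensoring with Q over S; equivalently, Z ⊗_S Q ≅ ∏_{x∈J} Q. -/

import Mathlib

/-! The product `c` of all edge labels is nonzero, and `c • f ∈ Z` for every `f : J → S`,
since `c (f x - f y)` is divisible by each label. As `c` becomes a unit in `Q`, every `q ⊗ f`
equals `(q / c) ⊗ (c • f)`, which comes from `Q ⊗_S Z`; injectivity is flatness of `Q`
over `S`. -/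

open scoped TensorProduct

theorem exists_ne_zero_forall_dvd {ι S : Type*} [Finite ι] [CommMonoidWithZero S]
    [NoZeroDivisors S] [Nontrivial S] (f : ι → S) (hf : ∀ i, f i ≠ 0) :
    ∃ c ≠ 0, ∀ i, f i ∣ c := by
  have := Fintype.ofFinite ι
  exact ⟨∏ i, f i, Finset.prod_ne_zero_iff.mpr fun i _ ↦ hf i,
    fun i ↦ Finset.dvd_prod_of_mem f (Finset.mem_univ i)⟩

namespace Submodule

variable {R M : Type*} [CommRing R] [AddCommGroup M] [Module R M]
  (A : Type*) [CommRing A] [Algebra R A] {p : Submodule R M}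

theorem baseChange_subtype_surjective_of_smul_mem {c : R} (hc : IsUnit (algebraMap R A c))
    (hp : ∀ m, c • m ∈ p) : Function.Surjective (p.subtype.baseChange A) := by
  rw [← LinearMap.range_eq_top, ← restrictScalars_eq_top_iff R, eq_top_iff,
    ← TensorProduct.span_tmul_eq_top, span_le]
  rintro _ ⟨a, m, rfl⟩
  refine ⟨(a * hc.unit⁻¹) ⊗ₜ ⟨c • m, hp m⟩, ?_⟩
  rw [LinearMap.baseChange_tmul, subtype_apply, TensorProduct.tmul_smul,
    TensorProduct.smul_tmul', Algebra.smul_def, mul_left_comm, hc.mul_val_inv, mul_one]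

theorem baseChange_subtype_bijective_of_smul_mem [Module.Flat R A] {c : R}
    (hc : IsUnit (algebraMap R A c)) (hp : ∀ m, c • m ∈ p) :
    Function.Bijective (p.subtype.baseChange A) := by
  refine ⟨?_, baseChange_subtype_surjective_of_smul_mem A hc hp⟩
  rw [LinearMap.baseChange_eq_ltensor]
  exact Module.Flat.lTensor_preserves_injective_linearMap p.subtype p.injective_subtype

end Submodule

/-- For an integral domain `S` with fraction field `Q` and the structure algebra
`Z ⊆ ∏_{x ∈ J} S` of a moment graph with nonzero edge labels on a finite vertex
set `J`, the inclusion `Z ⊆ ∏_{x ∈ J} S` becomes an isomorphism after tensoring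
with `Q` over `S`; that is, `Q ⊗_S Z → Q ⊗_S ∏_{x ∈ J} S ≅ ∏_{x ∈ J} Q` is
bijective. -/
theorem stmt10 {J : Type*} [Fintype J] {S : Type*} [CommRing S] [IsDomain S]
    (edge : J → J → Prop) (lab : J → J → S)
    (hne : ∀ x y, edge x y → lab x y ≠ 0)
    (Z : Subalgebra S (J → S))
    (hZ : (Z : Set (J → S)) = {z | ∀ x y, edge x y → lab x y ∣ z x - z y}) :
    Function.Bijective
      (LinearMap.baseChange (FractionRing S) (Subalgebra.toSubmodule Z).subtype) := by
  obtain ⟨c, hc, hdvd⟩ := exists_ne_zero_forall_dvd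
    (fun e : {e : J × J // edge e.1 e.2} ↦ lab e.1.1 e.1.2) fun e ↦ hne _ _ e.2
  have hmem : ∀ f : J → S, c • f ∈ Z := fun f ↦ by
    rw [← SetLike.mem_coe, hZ]
    intro x y hxy
    simpa only [Pi.smul_apply, smul_eq_mul, ← mul_sub] using (hdvd ⟨(x, y), hxy⟩).mul_right _
  have hcQ : IsUnit (algebraMap S (FractionRing S) c) :=
    (IsFractionRing.to_map_ne_zero_of_mem_nonZeroDivisors
      (mem_nonZeroDivisors_of_ne_zero hc)).isUnit
  exact Submodule.baseChange_subtype_bijective_of_smul_mem _ hcQ hmem
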